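/- arXiv:1606.00782 — 2 statements merged into one kernel-verified Lean document; each statement's English description precedes it below -/
import Mathlib

section
/- A continuous surjection f: X → Y of digital images is shy if and only if the inverse multivalued function f⁻¹ : Y ⊸ X is connectivity preserving, i.e., for every connected subset B of Y, f⁻¹(B) is connected in X. -/
/-- A subset `A` is connected under adjacency `κ` if any two of its points are
joined by a path within `A` whose consecutive points are `κ`-adjacent. -/
def DConn {X : Type*} (κ : X → X → Prop) (A : Set X) : Prop :=
  ∀ a ∈ A, ∀ b ∈ A,
    Relation.ReflTransGen (fun u v => κ u v ∧ u ∈ A ∧ v ∈ A) a b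

/-- `f` is digitally continuous if images of connected sets are connected. -/
def DCont {X Y : Type*} (κ : X → X → Prop) (lam : Y → Y → Prop) (f : X → Y) : Prop :=
  ∀ A : Set X, DConn κ A → DConn lam (f '' A)

/-- `f` is shy: a continuous surjection with connected point preimages and
connected preimages of adjacent pairs. -/
def DShy {X Y : Type*} (κ : X → X → Prop) (lam : Y → Y → Prop) (f : X → Y) : Prop :=
  DCont κ lam f ∧ Function.Surjective f ∧
    (∀ y : Y, DConn κ (f ⁻¹' {y})) ∧
    ∀ y₀ y₁ : Y, lam y₀ y₁ → DConn κ (f ⁻¹' {y₀, y₁})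

/- The union of the fibres over `B` is `f ⁻¹' B`. A path `f a = y₀, y₁, …, yₙ` in `B`
lifts to a path in `f ⁻¹' B`: one walks inside each connected set `f ⁻¹' {yᵢ, yᵢ₊₁}` from a point
over `yᵢ` (surjectivity provides one) to a point over `yᵢ₊₁`, and finishes inside the connected
fibre over `yₙ`. Conversely, singletons and adjacent pairs are connected sets of `Y`. -/

section DigitalConnectedness

variable {X : Type*} {κ : X → X → Prop}

theorem DConn.reflTransGen_of_subset {S A : Set X} (hS : DConn κ S) (hSA : S ⊆ A)
    {a b : X} (ha : a ∈ S) (hb : b ∈ S) :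
    Relation.ReflTransGen (fun u v => κ u v ∧ u ∈ A ∧ v ∈ A) a b :=
  Relation.ReflTransGen.mono (fun _ _ ⟨huv, hu, hv⟩ => ⟨huv, hSA hu, hSA hv⟩) _ _ (hS a ha b hb)

theorem dConn_singleton (x : X) : DConn κ {x} := by
  rintro a rfl b rfl
  exact .refl

theorem dConn_pair {x₀ x₁ : X} (h₀₁ : κ x₀ x₁) (h₁₀ : κ x₁ x₀) : DConn κ {x₀, x₁} := by
  rintro a (rfl | rfl) b (rfl | rfl)
  · exact .refl
  · exact .single ⟨h₀₁, .inl rfl, .inr rfl⟩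
  · exact .single ⟨h₁₀, .inr rfl, .inl rfl⟩
  · exact .refl

theorem DConn.preimage {Y : Type*} {lam : Y → Y → Prop} {f : X → Y}
    (hsurj : Function.Surjective f) (hfib : ∀ y, DConn κ (f ⁻¹' {y}))
    (hpair : ∀ y₀ y₁, lam y₀ y₁ → DConn κ (f ⁻¹' {y₀, y₁}))
    {B : Set Y} (hB : DConn lam B) : DConn κ (f ⁻¹' B) := by
  intro a ha b hb
  suffices lift : ∀ c, Relation.ReflTransGen (fun u v => lam u v ∧ u ∈ B ∧ v ∈ B) (f a) c →
      ∀ x, f x = c → Relation.ReflTransGen (fun u v => κ u v ∧ u ∈ f ⁻¹' B ∧ v ∈ f ⁻¹' B) a x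
    from lift (f b) (hB _ ha _ hb) b rfl
  intro c hc
  induction hc with
  | refl =>
    intro x hx
    have hfibB : f ⁻¹' {f a} ⊆ f ⁻¹' B := Set.preimage_mono (Set.singleton_subset_iff.2 ha)
    exact (hfib (f a)).reflTransGen_of_subset hfibB rfl hx
  | @tail c d _ hcd ih =>
    obtain ⟨hlam, hcB, hdB⟩ := hcd
    intro x hx
    obtain ⟨xc, rfl⟩ := hsurj c
    have hpairB : f ⁻¹' {f xc, d} ⊆ f ⁻¹' B :=
      Set.preimage_mono (Set.insert_subset hcB (Set.singleton_subset_iff.2 hdB))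
    exact (ih xc rfl).trans <|
      (hpair _ _ hlam).reflTransGen_of_subset hpairB (.inl rfl) (.inr hx)

end DigitalConnectedness

theorem shy_iff_inverse_connectivity_preserving_general {X Y : Type*}
    (κ : X → X → Prop) (lam : Y → Y → Prop)
    (hls : Symmetric lam)
    (f : X → Y) (hcont : DCont κ lam f) (hsurj : Function.Surjective f) :
    DShy κ lam f ↔
      ∀ B : Set Y, DConn lam B → DConn κ (⋃ y ∈ B, f ⁻¹' {y}) := by
  simp only [Set.biUnion_preimage_singleton]
  constructor
  · rintro ⟨-, -, hfib, hpair⟩ B hB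
    exact hB.preimage hsurj hfib hpair
  · intro h
    exact ⟨hcont, hsurj, fun y => h _ (dConn_singleton y),
      fun _ _ hlam => h _ (dConn_pair hlam (hls hlam))⟩

theorem shy_iff_inverse_connectivity_preserving {X Y : Type*}
    (κ : X → X → Prop) (lam : Y → Y → Prop)
    (hκs : Symmetric κ) (hκi : Irreflexive κ)
    (hls : Symmetric lam) (hli : Irreflexive lam)
    (f : X → Y) (hcont : DCont κ lam f) (hsurj : Function.Surjective f) :
    DShy κ lam f ↔
      ∀ B : Set Y, DConn lam B → DConn κ (⋃ y ∈ B, f ⁻¹' {y}) :=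
  shy_iff_inverse_connectivity_preserving_general κ lam hls f hcont hsurj
end

section
/- Let (X,κ) be a connected digital image and r ∈ X a point such that X \ {r} is disconnected. If f: (X,κ) → Y ⊆ (ℤ,c₁) is a shy map, then f equals the constant value f(r) on all but at most two of the connected components of X \ {r}. -/
/-- Shyness of `f` viewed as a map from the subset `S` onto the subset `T`. -/
def DShyOn {X Y : Type*} (κ : X → X → Prop) (lam : Y → Y → Prop)
    (f : X → Y) (S : Set X) (T : Set Y) : Prop :=
  (∀ s ∈ S, f s ∈ T) ∧
  (∀ A : Set X, A ⊆ S → DConn κ A → DConn lam (f '' A)) ∧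
  (∀ t ∈ T, ∃ s ∈ S, f s = t) ∧
  (∀ y : Y, DConn κ (S ∩ f ⁻¹' {y})) ∧
  ∀ y₀ y₁ : Y, y₀ ∈ T → y₁ ∈ T → lam y₀ y₁ → DConn κ (S ∩ f ⁻¹' {y₀, y₁})

/-- The `c₁`-adjacency on ℤ. -/
def c1 : ℤ → ℤ → Prop := fun a b => |a - b| = 1

/-!
Continuity forces `f` to change by at most one along each adjacency, so a path from a point
`x` with `f x > f r` to `r` meets the level `f r + 1` before reaching `r`. That level set is
connected and misses `r`, so all points of `X \ {r}` above `f r` lie in one component, and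
likewise all points below `f r`. Every other component lies in `f ⁻¹' {f r}`.
-/

open Relation

section

variable {X : Type*} {κ : X → X → Prop}

instance [Std.Symm κ] (A : Set X) : Std.Symm (fun u v => κ u v ∧ u ∈ A ∧ v ∈ A) :=
  ⟨fun _ _ h => ⟨Std.Symm.symm _ _ h.1, h.2.2, h.2.1⟩⟩

theorem reflTransGen_restrict_mono {A B : Set X} (hAB : A ⊆ B) {x y : X}
    (h : ReflTransGen (fun u v => κ u v ∧ u ∈ A ∧ v ∈ A) x y) :
    ReflTransGen (fun u v => κ u v ∧ u ∈ B ∧ v ∈ B) x y :=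
  ReflTransGen.mono (fun _ _ huv => ⟨huv.1, hAB huv.2.1, hAB huv.2.2⟩) _ _ h

theorem DConn.pair [Std.Symm κ] {u v : X} (huv : κ u v) : DConn κ {u, v} := by
  have hu : u ∈ ({u, v} : Set X) := Set.mem_insert u {v}
  have hv : v ∈ ({u, v} : Set X) := Set.mem_insert_of_mem u rfl
  rintro a (rfl | rfl) b (rfl | rfl)
  · exact .refl
  · exact .single ⟨huv, hu, hv⟩
  · exact .single ⟨Std.Symm.symm _ _ huv, hv, hu⟩
  · exact .refl

theorem abs_sub_le_one_of_dConn_c1_pair {a b : ℤ} (h : DConn c1 {a, b}) : |a - b| ≤ 1 := by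
  rcases (h a (Set.mem_insert a {b}) b (Set.mem_insert_of_mem a rfl)).cases_head
    with rfl | ⟨p, ⟨hap, -, rfl | rfl⟩, -⟩
  · simp
  · simp [c1] at hap
  · exact hap.le

/-- Discrete intermediate value theorem. -/
theorem exists_eq_of_reflTransGen {f : X → ℤ} (hstep : ∀ u v, κ u v → |f u - f v| ≤ 1)
    {x y : X} (hxy : ReflTransGen κ x y) {c : ℤ} (hx : c ≤ f x) (hy : f y < c) :
    ∃ z, f z = c ∧
      ReflTransGen (fun u v => κ u v ∧ u ∈ {u | c ≤ f u} ∧ v ∈ {u | c ≤ f u}) x z := by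
  induction hxy using ReflTransGen.head_induction_on with
  | refl => omega
  | @head u v huv _ ih =>
    by_cases hu : f u = c
    · exact ⟨u, hu, .refl⟩
    have hv : c ≤ f v := by have := abs_le.mp (hstep u v huv); omega
    obtain ⟨z, hz, hvz⟩ := ih hv
    exact ⟨z, hz, hvz.head ⟨huv, hx, hv⟩⟩

theorem reflTransGen_avoiding_of_lt_of_lt [Std.Symm κ] (hconn : DConn κ Set.univ)
    {f : X → ℤ} (hstep : ∀ u v, κ u v → |f u - f v| ≤ 1)
    (hlevel : ∀ c, DConn κ (f ⁻¹' {c})) {r x x' : X} (hx : f r < f x) (hx' : f r < f x') :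
    ReflTransGen (fun u v => κ u v ∧ u ∈ {u | u ≠ r} ∧ v ∈ {u | u ≠ r}) x x' := by
  have hup : {u | f r + 1 ≤ f u} ⊆ {u | u ≠ r} := by rintro u (hu : f r + 1 ≤ f u) rfl; omega
  have hlev : f ⁻¹' {f r + 1} ⊆ {u | u ≠ r} := by rintro u hu rfl; simp at hu
  have path_to_r (y : X) : ReflTransGen κ y r :=
    ReflTransGen.mono (fun _ _ h => h.1) _ _ (hconn y trivial r trivial)
  obtain ⟨z, hz, hxz⟩ := exists_eq_of_reflTransGen hstep (path_to_r x) hx (lt_add_one _)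
  obtain ⟨z', hz', hx'z'⟩ := exists_eq_of_reflTransGen hstep (path_to_r x') hx' (lt_add_one _)
  exact (reflTransGen_restrict_mono hup hxz).trans <|
    (reflTransGen_restrict_mono hlev (hlevel _ z hz z' hz')).trans <|
    Std.Symm.symm _ _ (reflTransGen_restrict_mono hup hx'z')

theorem exists_forall_imp_self [Nonempty X] (P : X → Prop) : ∃ a, ∀ x, P x → P a := by
  by_cases h : ∃ a, P a
  · obtain ⟨a, ha⟩ := h
    exact ⟨a, fun _ _ => ha⟩
  · exact ⟨Classical.arbitrary X, fun x hx => (h ⟨x, hx⟩).elim⟩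

end

theorem shy_constant_off_two_components_general {X : Type*}
    (κ : X → X → Prop) (hκs : Symmetric κ)
    (hconn : DConn κ Set.univ) (r : X)
    (Y : Set ℤ) (f : X → ℤ)
    (hshy : DShyOn κ c1 f Set.univ Y) :
    ∃ a b : X, ∀ x : X, x ≠ r →
      ¬ Relation.ReflTransGen (fun u v => κ u v ∧ u ≠ r ∧ v ≠ r) x a →
      ¬ Relation.ReflTransGen (fun u v => κ u v ∧ u ≠ r ∧ v ≠ r) x b →
      f x = f r := by
  have : Std.Symm κ := ⟨fun _ _ h => hκs h⟩
  obtain ⟨-, hcont, -, hfiber, -⟩ := hshy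
  have hstep (u v : X) (huv : κ u v) : |f u - f v| ≤ 1 := by
    refine abs_sub_le_one_of_dConn_c1_pair ?_
    simpa only [Set.image_pair] using hcont _ (Set.subset_univ _) (DConn.pair huv)
  have hlevel (c : ℤ) : DConn κ (f ⁻¹' {c}) := by simpa only [Set.univ_inter] using hfiber c
  have hstep' (u v : X) (huv : κ u v) : |-f u - -f v| ≤ 1 := by
    rw [neg_sub_neg, abs_sub_comm]; exact hstep u v huv
  have hlevel' (c : ℤ) : DConn κ ((-f ·) ⁻¹' {c}) := by
    simpa only [Set.preimage, Set.mem_singleton_iff, neg_eq_iff_eq_neg] using hlevel (-c)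
  have : Nonempty X := ⟨r⟩
  obtain ⟨a, ha⟩ := exists_forall_imp_self fun x => f r < f x
  obtain ⟨b, hb⟩ := exists_forall_imp_self fun x => f x < f r
  refine ⟨a, b, fun x _ hxa hxb => ?_⟩
  rcases lt_trichotomy (f x) (f r) with hlt | heq | hgt
  · exact (hxb (reflTransGen_avoiding_of_lt_of_lt hconn hstep' hlevel' (neg_lt_neg hlt)
      (neg_lt_neg (hb x hlt)))).elim
  · exact heq
  · exact (hxa (reflTransGen_avoiding_of_lt_of_lt hconn hstep hlevel hgt (ha x hgt))).elim

theorem shy_constant_off_two_components {X : Type*}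
    (κ : X → X → Prop) (hκs : Symmetric κ) (hκi : Irreflexive κ)
    (hconn : DConn κ Set.univ) (r : X)
    (hdis : ¬ DConn κ {x | x ≠ r})
    (Y : Set ℤ) (f : X → ℤ)
    (hshy : DShyOn κ c1 f Set.univ Y) :
    ∃ a b : X, ∀ x : X, x ≠ r →
      ¬ Relation.ReflTransGen (fun u v => κ u v ∧ u ≠ r ∧ v ≠ r) x a →
      ¬ Relation.ReflTransGen (fun u v => κ u v ∧ u ≠ r ∧ v ≠ r) x b →
      f x = f r :=
  shy_constant_off_two_components_general κ hκs hconn r Y f hshy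
end
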